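/- arXiv:2311.06611 — 2 statements merged into one kernel-verified Lean document; each statement's English description precedes it below -/
import Mathlib

section
/- Let G=(V,E,I,T) be a grapht and let ℱ={X_t : t∈T} be a family of pairwise disjoint subsets of V with t∈X_t, such that each X_t is boundary-linked: there is a system 𝒫_t={P_{t,e} : e∈δ_G(X_t)} of pairwise edge-disjoint paths where e is the first edge and t is the last vertex of P_{t,e}. Then for every system 𝒫 of pairwise edge-disjoint T-paths in G/ℱ there is a system 𝒫' of pairwise edge-disjoint T-paths in G such that for every P∈𝒫 there is a P'∈𝒫' with the same endpoints as P and E(P')⊇E(P). Moreover, 𝒫' can be chosen so that it links every t∈T for which 𝒫 links t in G/ℱ and 𝒫_t covers δ_G(t). -/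
/-! Common definitions: graphts (multigraphs with terminals), walks, paths, cycles,
edge cuts, inner Eulerian graphts, path systems, linkages, Erdős–Menger cuts,
restriction (edge deletion) and contraction. -/

universe u v

/-- A *grapht*: a multigraph (no loops, parallel edges allowed) given by an incidence
function `I : E → Sym2 V`, together with a set `T` of at least two terminal vertices. -/
structure Grapht (V : Type u) (E : Type v) where
  I : E → Sym2 V
  loopless : ∀ e : E, ¬ (I e).IsDiag
  T : Set V
  T_nontrivial : T.Nontrivial

namespace Grapht

variable {V : Type u} {E : Type v}

/-- `G.IsWalk vs es` holds when `vs` is the vertex sequence and `es` the edge sequence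
of a walk in `G`. -/
inductive IsWalk (G : Grapht V E) : List V → List E → Prop
  | nil (v : V) : IsWalk G [v] []
  | cons {u w : V} {vs : List V} {e : E} {es : List E} :
      G.I e = s(u, w) → IsWalk G (w :: vs) es → IsWalk G (u :: w :: vs) (e :: es)

/-- A finite path in the grapht `G` (no repeated vertices), with endpoints `first`, `last`. -/
structure Path (G : Grapht V E) where
  first : V
  last : V
  verts : List V
  edges : List E
  isWalk : G.IsWalk verts edges
  nodup : verts.Nodup
  head_eq : verts.head? = some first
  getLast_eq : verts.getLast? = some last

/-- A finite cycle in the grapht `G`. -/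
structure Cycle (G : Grapht V E) where
  verts : List V
  edges : List E
  isWalk : G.IsWalk verts edges
  closed : verts.head? = verts.getLast?
  nontrivial : edges ≠ []
  edges_nodup : edges.Nodup
  tail_nodup : verts.tail.Nodup

variable {G : Grapht V E}

/-- The internal (inner) vertices of a path. -/
def Path.inner (P : G.Path) : List V := (P.verts.drop 1).dropLast

/-- The edge set of a path. -/
def Path.edgeSet (P : G.Path) : Set E := {e | e ∈ P.edges}

/-- The edge set of a cycle. -/
def Cycle.edgeSet (C : G.Cycle) : Set E := {e | e ∈ C.edges}

variable (G)

/-- `δ_G(X)`: the set of edges with exactly one endpoint in `X`. -/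
def edgeCut (X : Set V) : Set E :=
  {e | ∃ u w, G.I e = s(u, w) ∧ u ∈ X ∧ w ∉ X}

/-- A grapht is *inner Eulerian* if there is no `X ⊆ V ∖ T` whose cut `δ(X)` is a
finite set of odd size. -/
def InnerEulerian : Prop :=
  ∀ X : Set V, Disjoint X G.T → ¬ ((G.edgeCut X).Finite ∧ Odd (G.edgeCut X).ncard)

/-- An `AB`-path: a path with first vertex in `A`, last vertex in `B` and no internal
vertex in `A ∪ B`. -/
def IsABPath (A B : Set V) (P : G.Path) : Prop :=
  P.first ∈ A ∧ P.last ∈ B ∧ ∀ v ∈ P.inner, v ∉ A ∪ B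

/-- A `T`-path: a path between two distinct terminal vertices without internal
terminal vertices. -/
def IsTPath (P : G.Path) : Prop :=
  P.first ∈ G.T ∧ P.last ∈ G.T ∧ P.first ≠ P.last ∧ ∀ v ∈ P.inner, v ∉ G.T

/-- A system of pairwise edge-disjoint paths. -/
def EdgeDisjoint (Ps : Set G.Path) : Prop :=
  Ps.Pairwise fun P Q => ∀ e, e ∈ P.edges → e ∉ Q.edges

/-- A system of pairwise edge-disjoint `T`-paths. -/
def IsTPathSystem (Ps : Set G.Path) : Prop :=
  G.EdgeDisjoint Ps ∧ ∀ P ∈ Ps, G.IsTPath P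

/-- The set of edges used by a path system. -/
def sysEdges (Ps : Set G.Path) : Set E := ⋃ P ∈ Ps, P.edgeSet

/-- `C` is *orthogonal* to the path system `Ps`: `C` consists of exactly one edge from
each path of `Ps`. -/
def Orthogonal (C : Set E) (Ps : Set G.Path) : Prop :=
  (∀ P ∈ Ps, ∃! e, e ∈ C ∧ e ∈ P.edges) ∧ ∀ e ∈ C, ∃ P ∈ Ps, e ∈ P.edges

/-- `C` separates `A` and `B`: every `AB`-path meets `C` (i.e. `G − C` has no `AB`-path). -/
def Separates (C : Set E) (A B : Set V) : Prop :=
  ∀ P : G.Path, G.IsABPath A B P → ∃ e ∈ C, e ∈ P.edges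

/-- An `AB`-cut. -/
def IsABCut (A B : Set V) (C : Set E) : Prop :=
  ∀ P : G.Path, G.IsABPath A B P → ∃ e ∈ C, e ∈ P.edges

/-- An Erdős–Menger `AB`-cut: an `AB`-cut orthogonal to some system of pairwise
edge-disjoint `AB`-paths. -/
def IsEMABCut (A B : Set V) (C : Set E) : Prop :=
  G.IsABCut A B C ∧
    ∃ Ps : Set G.Path, G.EdgeDisjoint Ps ∧ (∀ P ∈ Ps, G.IsABPath A B P) ∧ G.Orthogonal C Ps

/-- The order `⊴` on (Erdős–Menger) `AB`-cuts: on every `AB`-path the first edge of `C`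
comes no later than the first edge of `C'`. -/
def ABCutLE (A B : Set V) (C C' : Set E) : Prop :=
  ∀ P : G.Path, G.IsABPath A B P →
    ∀ i : Fin P.edges.length, P.edges.get i ∈ C' →
      ∃ j : Fin P.edges.length, (j : ℕ) ≤ (i : ℕ) ∧ P.edges.get j ∈ C

/-- `C` is the `⊴`-largest Erdős–Menger `AB`-cut. -/
def IsLargestEMABCut (A B : Set V) (C : Set E) : Prop :=
  G.IsEMABCut A B C ∧ ∀ C', G.IsEMABCut A B C' → G.ABCutLE A B C' C

/-- A system `Ps` of pairwise edge-disjoint `T`-paths *links* the terminal `t`: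
it covers `δ(t)`. -/
def Links (Ps : Set G.Path) (t : V) : Prop :=
  G.IsTPathSystem Ps ∧ ∀ e ∈ G.edgeCut {t}, ∃ P ∈ Ps, e ∈ P.edges

/-- The terminal `t` is linked. -/
def Linked (t : V) : Prop := ∃ Ps : Set G.Path, G.Links Ps t

/-- The linkability condition: every terminal is linked. -/
def LinkabilityCondition : Prop := ∀ t ∈ G.T, G.Linked t

/-- A perfect linkage: a system of pairwise edge-disjoint `T`-paths linking every
terminal. -/
def IsPerfectLinkage (Ps : Set G.Path) : Prop :=
  G.IsTPathSystem Ps ∧ ∀ t ∈ G.T, ∀ e ∈ G.edgeCut {t}, ∃ P ∈ Ps, e ∈ P.edges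

/-- In the two-terminal setting: a system of pairwise edge-disjoint `st`-paths
covering `δ(s)` (a linkage of `s`). -/
def IsStLinkage (s t : V) (Ps : Set G.Path) : Prop :=
  G.EdgeDisjoint Ps ∧ (∀ P ∈ Ps, G.IsABPath {s} {t} P) ∧
    ∀ e ∈ G.edgeCut {s}, ∃ P ∈ Ps, e ∈ P.edges

/-- `s` is linked (two-terminal setting). -/
def StLinked (s t : V) : Prop := ∃ Ps : Set G.Path, G.IsStLinkage s t Ps

/-- `λ_G(A,B)`: the maximal number of pairwise edge-disjoint `AB`-paths. -/
noncomputable def lambda (A B : Set V) : ℕ :=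
  sSup {n : ℕ | ∃ Ps : Set G.Path, G.EdgeDisjoint Ps ∧ (∀ P ∈ Ps, G.IsABPath A B P) ∧
    Ps.Finite ∧ Ps.ncard = n}

/-- The grapht obtained by deleting all edges outside `F`. -/
def restrict (F : Set E) : Grapht V F where
  I e := G.I e.1
  loopless e := G.loopless e.1
  T := G.T
  T_nontrivial := G.T_nontrivial

/-- The map sending every vertex of a contracted set `X t` (`t ∈ T`) to `t`. -/
noncomputable def contractMap (X : V → Set V) : V → V := fun v =>
  letI := Classical.dec (∃ u ∈ G.T, v ∈ X u)
  if h : ∃ u ∈ G.T, v ∈ X u then h.choose else v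

/-- The contraction `G/ℱ` of the family `ℱ = {X t : t ∈ T}`: each `X t` is contracted
to `t` and the arising loops are deleted. -/
noncomputable def contract (X : V → Set V) :
    Grapht V {e : E // ¬ ((G.I e).map (G.contractMap X)).IsDiag} where
  I e := (G.I e.1).map (G.contractMap X)
  loopless e := e.2
  T := G.T
  T_nontrivial := G.T_nontrivial

end Grapht

/-!
A `T`-path `P` of `G/ℱ` from `s` to `t` has no inner vertex in any `X u`, so its edges form a
walk of `G` from a vertex of `X s` to a vertex of `X t`. Boundary-linkedness implies that each
`Pt u f` leaves `X u` through `f` and then stays inside `X u` until it reaches `u`; prefixing the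
reversed path `Pt s f₁` at the first edge and appending `Pt t fₘ` at the last edge turns the walk
into a `T`-path of `G`. Lifts of edge-disjoint paths stay edge-disjoint: edges of `G/ℱ` are used
once, and an edge inside `X u` lies on the linkage path of a single boundary edge of `X u`, which
is used by a single path of the system. A path of the system through an edge `f ∈ δ(X t)` ends
at `t`, so its lift contains all of `Pt t f`, which gives the linking statement.
-/

theorem Sym2.exists_eq_mk_of_map_eq {α β : Type*} {f : α → β} {z : Sym2 α} {x y : β}
    (h : z.map f = s(x, y)) : ∃ a b, z = s(a, b) ∧ f a = x ∧ f b = y := by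
  induction z using Sym2.ind with
  | _ a b =>
    rcases Sym2.eq_iff.1 ((Sym2.map_mk f a b).symm.trans h) with ⟨ha, hb⟩ | ⟨ha, hb⟩
    · exact ⟨a, b, rfl, ha, hb⟩
    · exact ⟨b, a, Sym2.eq_swap, hb, ha⟩

namespace Grapht

variable {V : Type u} {E : Type v} {G : Grapht V E}

section Walk

variable {vs : List V} {es : List E}

theorem isWalk_singleton_iff {v : V} : G.IsWalk [v] es ↔ es = [] :=
  ⟨by rintro ⟨⟩; rfl, by rintro rfl; exact .nil v⟩

theorem isWalk_cons_cons_iff {u w : V} :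
    G.IsWalk (u :: w :: vs) es ↔
      ∃ e es', es = e :: es' ∧ G.I e = s(u, w) ∧ G.IsWalk (w :: vs) es' :=
  ⟨by rintro (_ | ⟨hI, hw⟩); exact ⟨_, _, rfl, hI, hw⟩,
    by rintro ⟨e, es', rfl, hI, hw⟩; exact .cons hI hw⟩

theorem IsWalk.exists_eq_cons_cons {e : E} (h : G.IsWalk vs (e :: es)) :
    ∃ u w ws, vs = u :: w :: ws ∧ G.I e = s(u, w) ∧ G.IsWalk (w :: ws) es := by
  cases h with
  | cons hI hw => exact ⟨_, _, _, rfl, hI, hw⟩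

theorem IsWalk.append {vs₁ vs₂ : List V} {x : V} {es₁ es₂ : List E}
    (h₁ : G.IsWalk (vs₁ ++ [x]) es₁) (h₂ : G.IsWalk (x :: vs₂) es₂) :
    G.IsWalk (vs₁ ++ x :: vs₂) (es₁ ++ es₂) := by
  induction vs₁ generalizing es₁ with
  | nil => rwa [List.nil_append, isWalk_singleton_iff.1 h₁]
  | cons u vs ih =>
    cases vs with
    | nil =>
      obtain ⟨e, es, rfl, hI, hw⟩ := isWalk_cons_cons_iff.1 h₁
      rw [isWalk_singleton_iff.1 hw]
      exact .cons hI h₂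
    | cons w vs =>
      obtain ⟨e, es, rfl, hI, hw⟩ := isWalk_cons_cons_iff.1 h₁
      exact .cons hI (ih hw)

theorem IsWalk.reverse (h : G.IsWalk vs es) : G.IsWalk vs.reverse es.reverse := by
  induction h with
  | nil v => exact .nil v
  | cons hI _ ih =>
    rw [List.reverse_cons] at ih
    simpa using ih.append (.cons (hI.trans Sym2.eq_swap) (.nil _))

theorem IsWalk.mem_of_mem_edges (h : G.IsWalk vs es) {e : E} (he : e ∈ es) {x : V}
    (hx : x ∈ G.I e) : x ∈ vs := by
  induction h with
  | nil => simp at he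
  | cons hI _ ih =>
    rcases List.mem_cons.1 he with rfl | he
    · rcases Sym2.mem_iff.1 (hI ▸ hx) with rfl | rfl <;> simp
    · exact List.mem_cons_of_mem _ (ih he)

theorem IsWalk.nodup_edges (h : G.IsWalk vs es) (hn : vs.Nodup) : es.Nodup := by
  induction h with
  | nil => simp
  | cons hI hw ih =>
    rw [List.nodup_cons] at hn ⊢
    exact ⟨fun he => hn.1 (hw.mem_of_mem_edges he (hI ▸ Sym2.mem_mk_left _ _)), ih hn.2⟩

theorem IsWalk.head?_eq_of_mem_edges (h : G.IsWalk vs es) (hn : vs.Nodup) {e : E}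
    (he : e ∈ es) {x : V} (hx : x ∈ G.I e) (hhead : vs.head? = some x) :
    es.head? = some e := by
  cases h with
  | nil => simp at he
  | cons _ hw =>
    obtain rfl := Option.some.inj hhead
    rcases List.mem_cons.1 he with rfl | he
    · rfl
    · exact absurd (hw.mem_of_mem_edges he hx) (List.nodup_cons.1 hn).1

theorem IsWalk.mem_edgeCut_of_head? (h : G.IsWalk vs es) (hn : vs.Nodup) {e : E}
    (he : es.head? = some e) {x : V} (hx : vs.head? = some x) : e ∈ G.edgeCut {x} := by
  cases h with
  | nil => simp at he
  | cons hI _ =>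
    obtain ⟨rfl, rfl⟩ := And.intro (Option.some.inj he) (Option.some.inj hx)
    exact ⟨_, _, hI, rfl, fun hw => (List.nodup_cons.1 hn).1 (hw ▸ List.mem_cons_self ..)⟩

theorem IsWalk.forall_mem_of_not_mem_edgeCut {S : Set V} (h : G.IsWalk vs es)
    (hS : ∀ g ∈ es, g ∉ G.edgeCut S) (hlast : ∀ z ∈ vs.getLast?, z ∈ S) : ∀ v ∈ vs, v ∈ S := by
  induction h with
  | nil v => simpa using hlast
  | cons hI hw ih =>
    rw [List.getLast?_cons_cons] at hlast
    have hrest := ih (fun g hg => hS g (List.mem_cons_of_mem _ hg)) hlast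
    intro v hv
    rcases List.mem_cons.1 hv with rfl | hv
    · by_contra hvS
      exact hS _ List.mem_cons_self ⟨_, v, hI.trans Sym2.eq_swap, hrest _ List.mem_cons_self, hvS⟩
    · exact hrest v hv

end Walk

namespace Path

variable {P : G.Path}

def reverse (P : G.Path) : G.Path where
  first := P.last
  last := P.first
  verts := P.verts.reverse
  edges := P.edges.reverse
  isWalk := P.isWalk.reverse
  nodup := List.nodup_reverse.2 P.nodup
  head_eq := by rw [List.head?_reverse, P.getLast_eq]
  getLast_eq := by rw [List.getLast?_reverse, P.head_eq]

theorem verts_eq (h : P.first ≠ P.last) : P.verts = P.first :: (P.inner ++ [P.last]) := by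
  obtain ⟨rest, hrest⟩ := List.head?_eq_some_iff.1 P.head_eq
  have hlast := P.getLast_eq
  rw [hrest] at hlast ⊢
  cases rest with
  | nil => exact absurd (Option.some.inj hlast) h
  | cons w ws =>
    rw [List.getLast?_cons_cons] at hlast
    simp [inner, hrest, List.dropLast_append_getLast? _ hlast]

theorem nodup_inner : P.inner.Nodup :=
  P.nodup.sublist ((List.dropLast_sublist _).trans (List.drop_sublist _ _))

theorem mem_inner (h : P.first ≠ P.last) {v : V} (hv : v ∈ P.inner) :
    v ∈ P.verts ∧ v ≠ P.first ∧ v ≠ P.last := by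
  have hn := P.nodup
  rw [P.verts_eq h] at hn ⊢
  obtain ⟨hfirst, hn⟩ := List.nodup_cons.1 hn
  refine ⟨by simp [hv], fun hvf => hfirst (by simp [← hvf, hv]), fun hvl => ?_⟩
  exact List.disjoint_of_nodup_append hn hv (by simp [hvl])

theorem head?_edges_eq_of_mem {e : E} (he : e ∈ P.edges) (hx : P.first ∈ G.I e) :
    P.edges.head? = some e :=
  P.isWalk.head?_eq_of_mem_edges P.nodup he hx P.head_eq

theorem getLast?_edges_eq_of_mem {e : E} (he : e ∈ P.edges) (hx : P.last ∈ G.I e) :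
    P.edges.getLast? = some e := by
  simpa [reverse] using P.reverse.head?_edges_eq_of_mem (by simpa [reverse] using he) hx

theorem mem_edgeCut_of_head? {e : E} (he : P.edges.head? = some e) : e ∈ G.edgeCut {P.first} :=
  P.isWalk.mem_edgeCut_of_head? P.nodup he P.head_eq

theorem mem_edgeCut_of_getLast? {e : E} (he : P.edges.getLast? = some e) :
    e ∈ G.edgeCut {P.last} :=
  P.reverse.mem_edgeCut_of_head? (by simpa [reverse] using he)

end Path

theorem IsTPath.first_eq_or_last_eq {P : G.Path} (hP : G.IsTPath P) {e : E} (he : e ∈ P.edges)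
    {u : V} (hu : u ∈ G.T) (hue : u ∈ G.I e) :
    (P.first = u ∧ P.edges.head? = some e) ∨ (P.last = u ∧ P.edges.getLast? = some e) := by
  have hv := P.isWalk.mem_of_mem_edges he hue
  rw [P.verts_eq hP.2.2.1] at hv
  rcases hv with _ | ⟨_, hv⟩
  · exact .inl ⟨rfl, P.head?_edges_eq_of_mem he hue⟩
  · rcases List.mem_append.1 hv with hv | hv
    · exact absurd hu (hP.2.2.2 u hv)
    · obtain rfl := List.mem_singleton.1 hv
      exact .inr ⟨rfl, P.getLast?_edges_eq_of_mem he hue⟩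

section Contract

variable {X : V → Set V}

variable (G) in
def IsTerminalFamily (X : V → Set V) : Prop :=
  (∀ t ∈ G.T, t ∈ X t) ∧ ∀ t ∈ G.T, ∀ t' ∈ G.T, t ≠ t' → Disjoint (X t) (X t')

theorem contractMap_spec (v : V) :
    (G.contractMap X v ∈ G.T ∧ v ∈ X (G.contractMap X v)) ∨
      (G.contractMap X v = v ∧ ∀ u ∈ G.T, v ∉ X u) := by
  unfold contractMap
  split_ifs with h
  · exact .inl h.choose_spec
  · exact .inr ⟨rfl, fun u hu hv => h ⟨u, hu, hv⟩⟩

theorem contractMap_of_not_mem {z : V} (h : G.contractMap X z ∉ G.T) :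
    G.contractMap X z = z ∧ ∀ u ∈ G.T, z ∉ X u :=
  (contractMap_spec z).resolve_left fun h' => h h'.1

theorem IsTerminalFamily.contractMap_eq_iff (hX : G.IsTerminalFamily X) {t v : V}
    (ht : t ∈ G.T) : G.contractMap X v = t ↔ v ∈ X t := by
  rcases contractMap_spec (X := X) v with ⟨h, hv⟩ | ⟨h, hv⟩
  · refine ⟨fun h' => h' ▸ hv, fun hvt => by_contra fun hne => ?_⟩
    exact Set.disjoint_left.1 (hX.2 _ h t ht hne) hv hvt
  · rw [h]
    exact ⟨fun hvt => hvt ▸ hX.1 v (hvt ▸ ht), fun hvt => absurd hvt (hv t ht)⟩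

theorem IsTerminalFamily.eq_of_mem (hX : G.IsTerminalFamily X) {t v : V} (ht : t ∈ G.T)
    (hv : v ∈ G.T) (hvt : v ∈ X t) : v = t :=
  ((hX.contractMap_eq_iff hv).2 (hX.1 v hv)).symm.trans ((hX.contractMap_eq_iff ht).2 hvt)

theorem IsTerminalFamily.isDiag_map_contractMap (hX : G.IsTerminalFamily X) {t : V}
    (ht : t ∈ G.T) {g : E} (hg : ∀ x ∈ G.I g, x ∈ X t) :
    ((G.I g).map (G.contractMap X)).IsDiag := by
  induction h : G.I g using Sym2.ind with
  | _ a b =>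
    rw [h] at hg
    rw [Sym2.map_mk, Sym2.mk_isDiag_iff, (hX.contractMap_eq_iff ht).2 (hg a (Sym2.mem_mk_left a b)),
      (hX.contractMap_eq_iff ht).2 (hg b (Sym2.mem_mk_right a b))]

theorem IsTerminalFamily.mem_contract_edgeCut_iff (hX : G.IsTerminalFamily X) {t : V}
    (ht : t ∈ G.T) {f : {e : E // ¬ ((G.I e).map (G.contractMap X)).IsDiag}} :
    f ∈ (G.contract X).edgeCut {t} ↔ f.1 ∈ G.edgeCut (X t) := by
  constructor
  · rintro ⟨u, w, hI, rfl, hw⟩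
    obtain ⟨a, b, hab, ha, hb⟩ := Sym2.exists_eq_mk_of_map_eq hI
    exact ⟨a, b, hab, (hX.contractMap_eq_iff ht).1 ha,
      fun hbX => hw ((hX.contractMap_eq_iff ht).2 hbX ▸ hb.symm)⟩
  · rintro ⟨a, b, hab, ha, hb⟩
    refine ⟨t, G.contractMap X b, ?_, rfl, fun hbt => hb ((hX.contractMap_eq_iff ht).1 hbt)⟩
    show (G.I f.1).map (G.contractMap X) = _
    rw [hab, Sym2.map_mk, (hX.contractMap_eq_iff ht).2 ha]

theorem IsTerminalFamily.exists_mem_contract_edgeCut (hX : G.IsTerminalFamily X) {t : V}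
    (ht : t ∈ G.T) {e : E} (he : e ∈ G.edgeCut (X t)) :
    ∃ f ∈ (G.contract X).edgeCut {t}, f.1 = e := by
  obtain ⟨a, b, hab, ha, hb⟩ := he
  have hloop : ¬ ((G.I e).map (G.contractMap X)).IsDiag := by
    rw [hab, Sym2.map_mk, Sym2.mk_isDiag_iff, (hX.contractMap_eq_iff ht).2 ha]
    exact fun hbt => hb ((hX.contractMap_eq_iff ht).1 hbt.symm)
  exact ⟨⟨e, hloop⟩, (hX.mem_contract_edgeCut_iff ht).2 ⟨a, b, hab, ha, hb⟩, rfl⟩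

theorem IsWalk.exists_lift_contract {a b : V} {vs : List V}
    {es : List {e : E // ¬ ((G.I e).map (G.contractMap X)).IsDiag}}
    (h : (G.contract X).IsWalk (a :: (vs ++ [b])) es) (hvs : ∀ v ∈ vs, v ∉ G.T) :
    ∃ a' b', G.contractMap X a' = a ∧ G.contractMap X b' = b ∧
      G.IsWalk (a' :: (vs ++ [b'])) (es.map Subtype.val) ∧ ∀ v ∈ vs, ∀ u ∈ G.T, v ∉ X u := by
  induction vs generalizing a es with
  | nil =>
    obtain ⟨e, es, rfl, hI, hw⟩ := isWalk_cons_cons_iff.1 h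
    obtain ⟨a', b', hab, ha, hb⟩ := Sym2.exists_eq_mk_of_map_eq hI
    rw [isWalk_singleton_iff.1 hw]
    exact ⟨a', b', ha, hb, .cons hab (.nil b'), by simp⟩
  | cons v vs ih =>
    obtain ⟨e, es, rfl, hI, hw⟩ := isWalk_cons_cons_iff.1 h
    obtain ⟨v', b', hv', hb, hw', hout⟩ := ih hw fun w hw => hvs w (List.mem_cons_of_mem _ hw)
    obtain ⟨a', w, haw, ha, hw⟩ := Sym2.exists_eq_mk_of_map_eq hI
    have hvT := hvs v List.mem_cons_self
    obtain ⟨hv'v, hv'X⟩ := contractMap_of_not_mem (hv' ▸ hvT)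
    obtain ⟨hwv, -⟩ := contractMap_of_not_mem (hw ▸ hvT)
    obtain rfl : v' = v := hv'v.symm.trans hv'
    obtain rfl : w = v' := hwv.symm.trans hw
    refine ⟨a', b', ha, hb, .cons haw hw', ?_⟩
    exact List.forall_mem_cons.2 ⟨hv'X, hout⟩

end Contract

section BoundaryLinkage

variable (G) in
def IsBoundaryLinkage (Y : Set V) (t : V) (Q : E → G.Path) : Prop :=
  (∀ e ∈ G.edgeCut Y, ∀ e' ∈ G.edgeCut Y, e ≠ e' →
      ∀ f, f ∈ (Q e).edges → f ∉ (Q e').edges) ∧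
    ∀ e ∈ G.edgeCut Y, (Q e).edges.head? = some e ∧ (Q e).last = t

variable {Y : Set V} {t : V} {Q : E → G.Path}

theorem IsBoundaryLinkage.exists_verts_eq (hQ : G.IsBoundaryLinkage Y t Q) (ht : t ∈ Y)
    {f : E} (hf : f ∈ G.edgeCut Y) :
    ∃ b a ws, (Q f).verts = b :: a :: ws ∧ (Q f).edges = f :: (Q f).edges.tail ∧
      G.I f = s(b, a) ∧ b ∉ Y ∧ G.IsWalk (a :: ws) (Q f).edges.tail ∧ ∀ v ∈ a :: ws, v ∈ Y := by
  obtain ⟨hhead, hlast⟩ := hQ.2 f hf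
  have hedges := List.eq_cons_of_mem_head? hhead
  have hw := (Q f).isWalk
  have hnodup := hw.nodup_edges (Q f).nodup
  rw [hedges] at hw hnodup
  obtain ⟨b, a, ws, hverts, hI, hw⟩ := hw.exists_eq_cons_cons
  -- a later edge `g ∈ δ(Y)` of `Q f` would also be the first edge of `Q g`
  have hinside : ∀ g ∈ (Q f).edges.tail, g ∉ G.edgeCut Y := fun g hg hgY =>
    hQ.1 f hf g hgY (fun hfg => (List.nodup_cons.1 hnodup).1 (hfg ▸ hg)) g
      (hedges ▸ List.mem_cons_of_mem _ hg) (List.mem_of_mem_head? (hQ.2 g hgY).1)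
  have hY := hw.forall_mem_of_not_mem_edgeCut hinside fun z hz => by
    have hl := (Q f).getLast_eq
    rw [hverts, List.getLast?_cons_cons, hlast] at hl
    exact (Option.some.inj (hz.symm.trans hl)) ▸ ht
  obtain ⟨u, w, huw, -, hw'⟩ := hf
  have hb : b ∉ Y := by
    rcases Sym2.eq_iff.1 (huw.symm.trans hI) with ⟨-, rfl⟩ | ⟨-, rfl⟩
    · exact absurd (hY w List.mem_cons_self) hw'
    · exact hw'
  exact ⟨b, a, ws, hverts, hedges, hI, hb, hw, hY⟩

theorem IsBoundaryLinkage.eq_or_forall_mem (hQ : G.IsBoundaryLinkage Y t Q) (ht : t ∈ Y)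
    {f g : E} (hf : f ∈ G.edgeCut Y) (hg : g ∈ (Q f).edges) : g = f ∨ ∀ x ∈ G.I g, x ∈ Y := by
  obtain ⟨b, a, ws, -, hedges, -, -, hw, hY⟩ := hQ.exists_verts_eq ht hf
  rw [hedges] at hg
  rcases List.mem_cons.1 hg with rfl | hg
  · exact .inl rfl
  · exact .inr fun x hx => hY x (hw.mem_of_mem_edges hg hx)

theorem IsBoundaryLinkage.exists_walk_prepend (hQ : G.IsBoundaryLinkage Y t Q) (ht : t ∈ Y)
    {x : V} {vs : List V} {es : List E} (hw : G.IsWalk (x :: vs) es) (hx : x ∈ Y)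
    (hvs : ∀ v ∈ vs, v ∉ Y) (hne : vs ≠ []) :
    ∃ e ∈ es.head?, ∃ us fs, G.IsWalk (us ++ vs) (fs ++ es) ∧ us.head? = some t ∧
      us.Nodup ∧ (∀ u ∈ us, u ∈ Y) ∧ ∀ g, g ∈ (Q e).edges ↔ g = e ∨ g ∈ fs := by
  obtain ⟨y, vs, rfl⟩ := List.exists_cons_of_ne_nil hne
  obtain ⟨e, es, rfl, hI, -⟩ := isWalk_cons_cons_iff.1 hw
  have he : e ∈ G.edgeCut Y := ⟨x, y, hI, hx, hvs y List.mem_cons_self⟩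
  obtain ⟨b, a, ws, hverts, hedges, hI', hb, hwQ, hY⟩ := hQ.exists_verts_eq ht he
  obtain rfl : a = x := by
    rcases Sym2.eq_iff.1 (hI.symm.trans hI') with ⟨rfl, -⟩ | ⟨rfl, -⟩
    · exact absurd hx hb
    · rfl
  have hlast := (Q e).getLast_eq
  rw [hverts, List.getLast?_cons_cons, (hQ.2 e he).2] at hlast
  have hnodup := (Q e).nodup
  rw [hverts] at hnodup
  refine ⟨e, rfl, (a :: ws).reverse, (Q e).edges.tail.reverse, ?_,
    by rw [List.head?_reverse, hlast], List.nodup_reverse.2 (List.nodup_cons.1 hnodup).2,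
    fun u hu => hY u (List.mem_reverse.1 hu),
    fun g => ?_⟩
  · have hwQ' : G.IsWalk (ws.reverse ++ [a]) (Q e).edges.tail.reverse := by simpa using hwQ.reverse
    simpa using hwQ'.append hw
  · conv_lhs => rw [hedges]
    simp

theorem IsBoundaryLinkage.exists_walk_append (hQ : G.IsBoundaryLinkage Y t Q) (ht : t ∈ Y)
    {x : V} {vs : List V} {es : List E} (hw : G.IsWalk (vs ++ [x]) es) (hx : x ∈ Y)
    (hvs : ∀ v ∈ vs, v ∉ Y) (hne : vs ≠ []) :
    ∃ e ∈ es.getLast?, ∃ us fs, G.IsWalk (vs ++ us) (es ++ fs) ∧ us.getLast? = some t ∧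
      us.Nodup ∧ (∀ u ∈ us, u ∈ Y) ∧ ∀ g, g ∈ (Q e).edges ↔ g = e ∨ g ∈ fs := by
  obtain ⟨e, he, us, fs, hw', hhead, hnodup, hY, hfs⟩ :=
    hQ.exists_walk_prepend ht (by simpa using hw.reverse) hx (by simpa using hvs)
      (by simpa using hne)
  refine ⟨e, by simpa using he, us.reverse, fs.reverse, by simpa using hw'.reverse,
    by rwa [List.getLast?_reverse], List.nodup_reverse.2 hnodup, by simpa using hY,
    by simpa using hfs⟩

theorem IsBoundaryLinkage.exists_path_of_isWalk {Ys Yt : Set V} {s t : V} {Qs Qt : E → G.Path}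
    (hQs : G.IsBoundaryLinkage Ys s Qs) (hQt : G.IsBoundaryLinkage Yt t Qt) (hs : s ∈ Ys)
    (ht : t ∈ Yt) (hY : Disjoint Ys Yt) {α γ : V} {vs : List V} {es : List E}
    (hw : G.IsWalk (α :: (vs ++ [γ])) es) (hα : α ∈ Ys) (hγ : γ ∈ Yt)
    (hvs : ∀ v ∈ vs, v ∉ Ys ∧ v ∉ Yt) (hnd : vs.Nodup) :
    ∃ P : G.Path, P.first = s ∧ P.last = t ∧ (∀ v ∈ P.verts, v ∈ Ys ∨ v ∈ vs ∨ v ∈ Yt) ∧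
      ∀ g, g ∈ P.edges ↔ g ∈ es ∨ (∃ e ∈ es.head?, g ∈ (Qs e).edges) ∨
        ∃ e ∈ es.getLast?, g ∈ (Qt e).edges := by
  obtain ⟨e₁, he₁, A, fs, hw, hA, hndA, hAY, hfs⟩ := hQs.exists_walk_prepend hs hw hα
    (fun v hv => (List.mem_append.1 hv).elim (fun hv => (hvs v hv).1)
      fun hv => List.mem_singleton.1 hv ▸ Set.disjoint_right.1 hY hγ) (by simp)
  rw [← List.append_assoc] at hw
  obtain ⟨eₘ, heₘ, B, fs', hw, hB, hndB, hBY, hfs'⟩ := hQt.exists_walk_append ht hw hγ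
    (fun v hv => (List.mem_append.1 hv).elim (fun hv => Set.disjoint_left.1 hY (hAY v hv))
      fun hv => (hvs v hv).2) (by simp [List.ne_nil_of_mem (List.mem_of_mem_head? hA)])
  have hes : es ≠ [] := List.ne_nil_of_mem (List.mem_of_mem_head? he₁)
  rw [List.getLast?_append_of_ne_nil _ hes] at heₘ
  have hnodup : (A ++ vs ++ B).Nodup := by
    refine (hndA.append hnd fun v hvA hv => (hvs v hv).1 (hAY v hvA)).append hndB ?_
    intro v hv hvB
    rcases List.mem_append.1 hv with hvA | hv
    · exact Set.disjoint_left.1 hY (hAY v hvA) (hBY v hvB)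
    · exact (hvs v hv).2 (hBY v hvB)
  refine ⟨⟨s, t, A ++ vs ++ B, fs ++ es ++ fs', hw, hnodup, by simp [List.head?_append, hA],
    by simp [List.getLast?_append, hB]⟩, rfl, rfl, fun v hv => ?_, fun g => ?_⟩
  · rcases List.mem_append.1 hv with hv | hv
    · rcases List.mem_append.1 hv with hv | hv
      exacts [.inl (hAY v hv), .inr (.inl hv)]
    · exact .inr (.inr (hBY v hv))
  · have h₁ := List.mem_of_mem_head? he₁
    have hₘ := List.mem_of_mem_getLast? heₘ
    rw [Option.mem_def] at he₁ heₘ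
    simp only [List.mem_append, he₁, heₘ, Option.mem_some_iff, exists_eq_left', hfs, hfs']
    constructor
    · tauto
    · rintro (h | (rfl | h) | (rfl | h)) <;> tauto

end BoundaryLinkage

section Lift

variable {X : V → Set V}

structure IsLift (Pt : V → E → G.Path) (P : (G.contract X).Path) (P' : G.Path) : Prop where
  first_eq : P'.first = P.first
  last_eq : P'.last = P.last
  isTPath : G.IsTPath P'
  mem_edges_iff : ∀ g, g ∈ P'.edges ↔ (∃ f ∈ P.edges, f.1 = g) ∨
    (∃ f ∈ P.edges.head?, g ∈ (Pt P.first f.1).edges) ∨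
      ∃ f ∈ P.edges.getLast?, g ∈ (Pt P.last f.1).edges

variable {Pt : V → E → G.Path}

theorem exists_isLift (hX : G.IsTerminalFamily X)
    (hBL : ∀ t ∈ G.T, G.IsBoundaryLinkage (X t) t (Pt t)) {P : (G.contract X).Path}
    (hP : (G.contract X).IsTPath P) : ∃ P', IsLift Pt P P' := by
  obtain ⟨hs, ht, hst, hinner⟩ := hP
  have hw := P.isWalk
  rw [P.verts_eq hst] at hw
  obtain ⟨α, γ, hα, hγ, hw, hout⟩ := hw.exists_lift_contract hinner
  obtain ⟨P', hfirst, hlast, hverts, hedges⟩ := (hBL _ hs).exists_path_of_isWalk (hBL _ ht)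
    (hX.1 _ hs) (hX.1 _ ht) (hX.2 _ hs _ ht hst) hw ((hX.contractMap_eq_iff hs).1 hα)
    ((hX.contractMap_eq_iff ht).1 hγ) (fun v hv => ⟨hout v hv _ hs, hout v hv _ ht⟩) P.nodup_inner
  have hst' : P'.first ≠ P'.last := hfirst ▸ hlast ▸ hst
  refine ⟨P', hfirst, hlast, ⟨hfirst ▸ hs, hlast ▸ ht, hst', fun v hv hvT => ?_⟩, fun g => ?_⟩
  · obtain ⟨hv, hvs, hvt⟩ := P'.mem_inner hst' hv
    rcases hverts v hv with hv | hv | hv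
    · exact hvs (hfirst ▸ hX.eq_of_mem hs hvT hv)
    · exact hinner v hv hvT
    · exact hvt (hlast ▸ hX.eq_of_mem ht hvT hv)
  · simp only [hedges, List.mem_map, List.head?_map, List.getLast?_map, Option.exists_mem_map]

theorem IsLift.mem_edges_of_mem_edgeCut {P : (G.contract X).Path} {P' : G.Path}
    (hL : IsLift Pt P P') (hP : (G.contract X).IsTPath P) {u : V} (hu : u ∈ G.T)
    {f : {e : E // ¬ ((G.I e).map (G.contractMap X)).IsDiag}} (hf : f ∈ P.edges)
    (hfu : f ∈ (G.contract X).edgeCut {u}) {g : E} (hg : g ∈ (Pt u f.1).edges) :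
    g ∈ P'.edges := by
  obtain ⟨a, b, hab, rfl, -⟩ := hfu
  rcases hP.first_eq_or_last_eq hf hu (hab ▸ Sym2.mem_mk_left a b) with ⟨rfl, h⟩ | ⟨rfl, h⟩
  · exact (hL.mem_edges_iff g).2 (.inr (.inl ⟨f, h, hg⟩))
  · exact (hL.mem_edges_iff g).2 (.inr (.inr ⟨f, h, hg⟩))

theorem IsLift.mem_edges_cases (hX : G.IsTerminalFamily X)
    (hBL : ∀ t ∈ G.T, G.IsBoundaryLinkage (X t) t (Pt t)) {P : (G.contract X).Path}
    {P' : G.Path} (hL : IsLift Pt P P') (hP : (G.contract X).IsTPath P) {g : E}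
    (hg : g ∈ P'.edges) :
    (∃ f ∈ P.edges, f.1 = g) ∨ ∃ u ∈ G.T, ∃ f ∈ P.edges, f.1 ∈ G.edgeCut (X u) ∧
      g ∈ (Pt u f.1).edges ∧ ∀ x ∈ G.I g, x ∈ X u := by
  have key : ∀ u ∈ G.T, ∀ f ∈ P.edges, f ∈ (G.contract X).edgeCut {u} →
      g ∈ (Pt u f.1).edges → (∃ f ∈ P.edges, f.1 = g) ∨ ∃ u ∈ G.T, ∃ f ∈ P.edges,
        f.1 ∈ G.edgeCut (X u) ∧ g ∈ (Pt u f.1).edges ∧ ∀ x ∈ G.I g, x ∈ X u := by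
    intro u hu f hf hfu hgf
    rw [hX.mem_contract_edgeCut_iff hu] at hfu
    rcases (hBL u hu).eq_or_forall_mem (hX.1 u hu) hfu hgf with rfl | hin
    · exact .inl ⟨f, hf, rfl⟩
    · exact .inr ⟨u, hu, f, hf, hfu, hgf, hin⟩
  rcases (hL.mem_edges_iff g).1 hg with h | ⟨f, hf, hgf⟩ | ⟨f, hf, hgf⟩
  · exact .inl h
  · exact key _ hP.1 f (List.mem_of_mem_head? hf) (P.mem_edgeCut_of_head? hf) hgf
  · exact key _ hP.2.1 f (List.mem_of_mem_getLast? hf) (P.mem_edgeCut_of_getLast? hf) hgf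

theorem IsLift.edges_disjoint (hX : G.IsTerminalFamily X)
    (hBL : ∀ t ∈ G.T, G.IsBoundaryLinkage (X t) t (Pt t)) {P₁ P₂ : (G.contract X).Path}
    {P₁' P₂' : G.Path} (hL₁ : IsLift Pt P₁ P₁') (hL₂ : IsLift Pt P₂ P₂')
    (hP₁ : (G.contract X).IsTPath P₁) (hP₂ : (G.contract X).IsTPath P₂)
    (hdisj : ∀ f, f ∈ P₁.edges → f ∉ P₂.edges) : ∀ g, g ∈ P₁'.edges → g ∉ P₂'.edges := by
  intro g hg₁ hg₂
  have loop : ∀ (f : {e : E // ¬ ((G.I e).map (G.contractMap X)).IsDiag}), ∀ u ∈ G.T,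
      (∀ x ∈ G.I f.1, x ∈ X u) → False := fun f _ hu hin => f.2 (hX.isDiag_map_contractMap hu hin)
  rcases hL₁.mem_edges_cases hX hBL hP₁ hg₁ with
    ⟨f₁, hf₁, rfl⟩ | ⟨u₁, hu₁, f₁, hf₁, hc₁, hg₁, hin₁⟩ <;>
  rcases hL₂.mem_edges_cases hX hBL hP₂ hg₂ with
    ⟨f₂, hf₂, h⟩ | ⟨u₂, hu₂, f₂, hf₂, hc₂, hg₂, hin₂⟩
  · exact hdisj f₁ hf₁ (Subtype.ext h ▸ hf₂)
  · exact loop f₁ u₂ hu₂ hin₂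
  · exact loop f₂ u₁ hu₁ (h ▸ hin₁)
  · obtain rfl : u₁ = u₂ := by
      by_contra hne
      obtain ⟨x, hx⟩ : ∃ x, x ∈ G.I g := ⟨_, Sym2.out_fst_mem _⟩
      exact Set.disjoint_left.1 (hX.2 u₁ hu₁ u₂ hu₂ hne) (hin₁ x hx) (hin₂ x hx)
    refine (hBL u₁ hu₁).1 _ hc₁ _ hc₂ (fun h => hdisj f₁ hf₁ ?_) g hg₁ hg₂
    exact Subtype.ext h ▸ hf₂

end Lift

end Grapht

/-- **Lifting lemma.** Systems of edge-disjoint `T`-paths of the contraction `G/ℱ` of a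
family of boundary-linked sets can be lifted to `G`, preserving endpoints, edges, and
(under covering assumptions) linking. -/
theorem lifting_lemma {V : Type u} {E : Type v} (G : Grapht V E) (X : V → Set V)
    (hmem : ∀ t ∈ G.T, t ∈ X t)
    (hdisj : ∀ t ∈ G.T, ∀ t' ∈ G.T, t ≠ t' → Disjoint (X t) (X t'))
    (Pt : V → E → G.Path)
    (hBL : ∀ t ∈ G.T,
      (∀ e ∈ G.edgeCut (X t), ∀ e' ∈ G.edgeCut (X t), e ≠ e' →
        ∀ f, f ∈ (Pt t e).edges → f ∉ (Pt t e').edges) ∧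
      ∀ e ∈ G.edgeCut (X t), (Pt t e).edges.head? = some e ∧ (Pt t e).last = t)
    (Ps : Set (G.contract X).Path) (hPs : (G.contract X).IsTPathSystem Ps) :
    ∃ Ps' : Set G.Path, G.IsTPathSystem Ps' ∧
      (∀ P ∈ Ps, ∃ P' ∈ Ps', P'.first = P.first ∧ P'.last = P.last ∧
        ∀ f, f ∈ P.edges → f.1 ∈ P'.edges) ∧
      ∀ t ∈ G.T,
        (∀ e ∈ (G.contract X).edgeCut {t}, ∃ P ∈ Ps, e ∈ P.edges) →
        (∀ e ∈ G.edgeCut {t}, ∃ f ∈ G.edgeCut (X t), e ∈ (Pt t f).edges) →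
        ∀ e ∈ G.edgeCut {t}, ∃ P' ∈ Ps', e ∈ P'.edges := by
  have hX : G.IsTerminalFamily X := ⟨hmem, hdisj⟩
  choose lift hlift using fun P : Ps => Grapht.exists_isLift hX hBL (hPs.2 P P.2)
  refine ⟨Set.range lift, ⟨?_, ?_⟩, fun P hP => ⟨lift ⟨P, hP⟩, ⟨_, rfl⟩, (hlift _).first_eq,
    (hlift _).last_eq, fun f hf => ((hlift _).mem_edges_iff _).2 (.inl ⟨f, hf, rfl⟩)⟩, ?_⟩
  · rintro _ ⟨P₁, rfl⟩ _ ⟨P₂, rfl⟩ hne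
    exact (hlift P₁).edges_disjoint hX hBL (hlift P₂) (hPs.2 _ P₁.2) (hPs.2 _ P₂.2)
      (hPs.1 P₁.2 P₂.2 fun h => hne (congrArg lift (Subtype.ext h)))
  · rintro _ ⟨P, rfl⟩
    exact (hlift P).isTPath
  · intro t ht hcov hPt e he
    obtain ⟨f, hf, hef⟩ := hPt e he
    obtain ⟨f', hf', rfl⟩ := hX.exists_mem_contract_edgeCut ht hf
    obtain ⟨P, hP, hf'P⟩ := hcov f' hf'
    exact ⟨lift ⟨P, hP⟩, ⟨_, rfl⟩, (hlift _).mem_edges_of_mem_edgeCut (hPs.2 P hP) ht hf'P hf' hef⟩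
end

section
/- Let G=(V,E,I,T) be an inner Eulerian grapht and let H be a subgraph of G that is either a finite cycle or a T-path. Then the grapht G−E(H) (obtained by deleting the edges of H) is inner Eulerian. -/
/-! Common definitions: graphts (multigraphs with terminals), walks, paths, cycles,
edge cuts, inner Eulerian graphts, path systems, linkages, Erdős–Menger cuts,
restriction (edge deletion) and contraction. -/

universe u v

section Aux

variable {V : Type u} {E : Type v}

open Classical in
lemma Grapht.walk_endpoints_mem {G : Grapht V E} {vs : List V} {es : List E}
    (h : G.IsWalk vs es) {e : E} (he : e ∈ es) {a b : V} (hab : G.I e = s(a, b)) :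
    a ∈ vs ∧ b ∈ vs := by
  induction h with
  | nil v => simp at he
  | @cons u w vs' e' es' hI hw ih =>
    rcases List.mem_cons.mp he with rfl | he'
    · rw [hI, Sym2.eq_iff] at hab
      rcases hab with ⟨rfl, rfl⟩ | ⟨rfl, rfl⟩ <;> simp
    · have := ih he'
      exact ⟨List.mem_cons_of_mem _ this.1, List.mem_cons_of_mem _ this.2⟩

lemma Grapht.walk_edges_nodup {G : Grapht V E} {vs : List V} {es : List E}
    (h : G.IsWalk vs es) (hv : vs.Nodup) : es.Nodup := by
  induction h with
  | nil => simp
  | @cons u w vs' e es' hI hw ih =>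
    refine List.nodup_cons.mpr ⟨?_, ih (List.nodup_cons.mp hv).2⟩
    intro he
    have := Grapht.walk_endpoints_mem hw he hI
    exact (List.nodup_cons.mp hv).1 this.1

lemma Grapht.walk_ne_nil {G : Grapht V E} {vs : List V} {es : List E}
    (h : G.IsWalk vs es) : vs ≠ [] := by
  cases h <;> simp

open Classical in
lemma Grapht.walk_cross_parity (G : Grapht V E) (X : Set V) {vs : List V} {es : List E}
    (h : G.IsWalk vs es) {u w : V} (hu : vs.head? = some u) (hw : vs.getLast? = some w) :
    (Even (es.filter (fun e => decide (e ∈ G.edgeCut X))).length ↔ (u ∈ X ↔ w ∈ X)) := by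
  induction h generalizing u with
  | nil v =>
    simp only [List.head?_cons, Option.some.injEq] at hu
    simp only [List.getLast?_singleton, Option.some.injEq] at hw
    subst hu; subst hw
    simp
  | @cons u' w' vs' e es' hI hwalk ih =>
    simp only [List.head?_cons, Option.some.injEq] at hu
    subst hu
    rw [List.getLast?_cons_cons] at hw
    have IH := ih (u := w') rfl hw
    have hcut : e ∈ G.edgeCut X ↔ ((u' ∈ X ∧ w' ∉ X) ∨ (w' ∈ X ∧ u' ∉ X)) := by
      constructor
      · rintro ⟨a, b, hab, ha, hb⟩
        rw [hI, Sym2.eq_iff] at hab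
        rcases hab with ⟨rfl, rfl⟩ | ⟨rfl, rfl⟩
        · exact Or.inl ⟨ha, hb⟩
        · exact Or.inr ⟨ha, hb⟩
      · rintro (⟨h1, h2⟩ | ⟨h1, h2⟩)
        · exact ⟨u', w', hI, h1, h2⟩
        · exact ⟨w', u', by rw [hI, Sym2.eq_swap], h1, h2⟩
    by_cases hc : e ∈ G.edgeCut X
    · rw [List.filter_cons, if_pos (by simpa using hc), List.length_cons,
        Nat.even_add_one, IH]
      constructor
      · intro hne
        rcases hcut.mp hc with ⟨h1, h2⟩ | ⟨h1, h2⟩ <;> tauto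
      · intro hiff
        rcases hcut.mp hc with ⟨h1, h2⟩ | ⟨h1, h2⟩ <;> tauto
    · rw [List.filter_cons, if_neg (by simpa using hc), IH]
      have hsame : u' ∈ X ↔ w' ∈ X := by
        by_cases h1 : u' ∈ X <;> by_cases h2 : w' ∈ X <;> tauto
      rw [hsame]

end Aux

/-- Deleting the edges of a cycle or of a `T`-path from an inner Eulerian grapht yields
an inner Eulerian grapht. -/
theorem innerEulerian_delete_cycle_or_tpath {V : Type u} {E : Type v} (G : Grapht V E)
    (hG : G.InnerEulerian) (S : Set E)
    (hH : (∃ C : G.Cycle, S = C.edgeSet) ∨ ∃ P : G.Path, G.IsTPath P ∧ S = P.edgeSet) :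
    (G.restrict Sᶜ).InnerEulerian := by
  classical
  intro X hX hbad
  obtain ⟨hfin, hodd⟩ := hbad
  set p : E → Bool := fun e => decide (e ∈ G.edgeCut X) with hp
  -- Obtain the edge list of H with the key parity property
  obtain ⟨L, hLnd, hLS, hLeven⟩ :
      ∃ L : List E, L.Nodup ∧ S = {e | e ∈ L} ∧ Even ((L.filter p).length) := by
    rcases hH with ⟨C, rfl⟩ | ⟨P, hTP, rfl⟩
    · refine ⟨C.edges, C.edges_nodup, rfl, ?_⟩
      have hne : C.verts ≠ [] := Grapht.walk_ne_nil C.isWalk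
      obtain ⟨v, vs, hv⟩ := List.exists_cons_of_ne_nil hne
      have hu : C.verts.head? = some v := by rw [hv]; rfl
      have hw : C.verts.getLast? = some v := by rw [← C.closed, hu]
      have := G.walk_cross_parity X C.isWalk hu hw
      simpa using this
    · refine ⟨P.edges, Grapht.walk_edges_nodup P.isWalk P.nodup, rfl, ?_⟩
      have := G.walk_cross_parity X P.isWalk P.head_eq P.getLast_eq
      rw [this]
      have h1 : P.first ∉ X := fun h => hX.ne_of_mem h hTP.1 rfl
      have h2 : P.last ∉ X := fun h => hX.ne_of_mem h hTP.2.1 rfl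
      tauto
  -- The part of δ_G(X) inside S
  have hSinter : S ∩ G.edgeCut X = {e | e ∈ L.filter p} := by
    ext e
    simp only [hLS, Set.mem_inter_iff, Set.mem_setOf_eq, List.mem_filter, hp,
      decide_eq_true_eq]
  have hSfin : (S ∩ G.edgeCut X).Finite := by
    rw [hSinter]; exact (L.filter p).finite_toSet
  have hSncard : (S ∩ G.edgeCut X).ncard = (L.filter p).length := by
    rw [hSinter]
    have hnd : (L.filter p).Nodup := hLnd.filter p
    calc {e | e ∈ L.filter p}.ncard = ((L.filter p).toFinset : Set E).ncard := by
          congr 1; ext e; simp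
      _ = (L.filter p).toFinset.card := Set.ncard_coe_finset _
      _ = (L.filter p).length := List.toFinset_card_of_nodup hnd
  -- Decompose δ_G(X)
  set C' := (G.restrict Sᶜ).edgeCut X with hC'
  have hdecomp : G.edgeCut X = (Subtype.val '' C') ∪ (S ∩ G.edgeCut X) := by
    ext e
    constructor
    · intro he
      by_cases heS : e ∈ S
      · exact Or.inr ⟨heS, he⟩
      · left
        exact ⟨⟨e, heS⟩, he, rfl⟩
    · rintro (⟨⟨e', he'⟩, hmem, rfl⟩ | ⟨-, he⟩)
      · exact hmem
      · exact he
  have hdisj : Disjoint (Subtype.val '' C') (S ∩ G.edgeCut X) := by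
    rw [Set.disjoint_left]
    rintro e ⟨⟨e', he'⟩, hmem, rfl⟩ ⟨heS, -⟩
    exact he' heS
  have himgfin : (Subtype.val '' C').Finite := hfin.image _
  have hGfin : (G.edgeCut X).Finite := by
    rw [hdecomp]; exact himgfin.union hSfin
  have hncard : (G.edgeCut X).ncard
      = (Subtype.val '' C').ncard + (S ∩ G.edgeCut X).ncard := by
    conv_lhs => rw [hdecomp]
    exact Set.ncard_union_eq hdisj himgfin hSfin
  have himg : (Subtype.val '' C').ncard = C'.ncard :=
    Set.ncard_image_of_injective _ Subtype.val_injective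
  have hGodd : Odd (G.edgeCut X).ncard := by
    rw [hncard, himg, hSncard]
    exact hodd.add_even hLeven
  exact hG X hX ⟨hGfin, hGodd⟩
end
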